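/- Let G be a connected finite graph with loops at all vertices and cyclomatic number k (k = |E| - |V| + 1 counting only non-loop edges), and let T be any spanning tree of G (with loops retained at every vertex). Then γ(T) - 4k ≤ γ(G) ≤ γ(T) + 2k. -/

import Mathlib

open scoped Classical
open Finset

/-- Sum of opinions over the closed neighborhood of `v` (closed since every
vertex has a loop, so `v` itself is counted). -/
noncomputable def nbrSum {V : Type*} [Fintype V] (G : SimpleGraph V) (f : V → ℤ) (v : V) : ℤ :=
  ∑ w ∈ univ.filter (fun w => G.Adj v w ∨ w = v), f w

/-- `f` is an opinion function: every value is `1` or `-1`. -/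
def IsOpinion {V : Type*} (f : V → ℤ) : Prop := ∀ v, f v = 1 ∨ f v = -1

/-- The set of vertices voting 'yes'. -/
noncomputable def yesVoters {V : Type*} [Fintype V] (G : SimpleGraph V) (f : V → ℤ) : Finset V :=
  univ.filter (fun v => 0 < nbrSum G f v)

/-- `f` is strictly majoritarian on `G`: more than `|V|/2` vertices vote 'yes'. -/
def Majoritarian {V : Type*} [Fintype V] (G : SimpleGraph V) (f : V → ℤ) : Prop :=
  Fintype.card V < 2 * (yesVoters G f).card

/-- The strict domination number: minimum of `f(V)` over strictly majoritarian
opinion functions. -/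
noncomputable def gamma {V : Type*} [Fintype V] (G : SimpleGraph V) : ℤ :=
  sInf {t : ℤ | ∃ f : V → ℤ, IsOpinion f ∧ Majoritarian G f ∧ t = ∑ v, f v}

/-!
Deleting an edge `uv` only changes the votes of `u` and `v`, each by the opinion at the other
endpoint. Starting from an optimal opinion function on `G`, turning at most one `-1` into `+1`
in each of the closed neighbourhoods of `u` and `v` keeps both of their votes after the deletion,
so `γ(G - uv) ≤ γ(G) + 4`. Conversely, from an optimal function on `G - uv`, either both endpoints
already hold `+1` or turning an endpoint holding `-1` into `+1` restores both votes in `G`, so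
`γ(G) ≤ γ(G - uv) + 2`. A spanning tree is reached from `G` by deleting `k` edges.
-/

namespace SimpleGraph

variable {V : Type*} [Fintype V] {G : SimpleGraph V} {u v w : V}

noncomputable def closedNbhd (G : SimpleGraph V) (v : V) : Finset V :=
  univ.filter (fun w => G.Adj v w ∨ w = v)

lemma mem_closedNbhd : w ∈ G.closedNbhd v ↔ G.Adj v w ∨ w = v := by simp [closedNbhd]

lemma self_mem_closedNbhd : v ∈ G.closedNbhd v := mem_closedNbhd.2 (Or.inr rfl)

lemma closedNbhd_deleteEdges_of_ne (hu : w ≠ u) (hv : w ≠ v) :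
    (G.deleteEdges {s(u, v)}).closedNbhd w = G.closedNbhd w := by
  ext x
  simp only [mem_closedNbhd, deleteEdges_adj, Set.mem_singleton_iff, Sym2.eq_iff]
  grind

lemma closedNbhd_eq_insert_deleteEdges (huv : G.Adj u v) :
    G.closedNbhd u = insert v ((G.deleteEdges {s(u, v)}).closedNbhd u) := by
  ext x
  simp only [mem_closedNbhd, deleteEdges_adj, Set.mem_singleton_iff, Sym2.eq_iff, mem_insert]
  grind [huv.ne]

lemma one_lt_card_closedNbhd (huv : G.Adj u v) : 1 < #(G.closedNbhd u) :=
  one_lt_card.2 ⟨v, mem_closedNbhd.2 (Or.inl huv), u, self_mem_closedNbhd, huv.ne'⟩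

end SimpleGraph

open SimpleGraph

section NbrSum

variable {V : Type*} [Fintype V] {G : SimpleGraph V} {u v w : V} {f g : V → ℤ}

lemma nbrSum_eq_sum_closedNbhd (G : SimpleGraph V) (f : V → ℤ) (v : V) :
    nbrSum G f v = ∑ w ∈ G.closedNbhd v, f w := rfl

lemma nbrSum_deleteEdges_of_ne (hu : w ≠ u) (hv : w ≠ v) :
    nbrSum (G.deleteEdges {s(u, v)}) f w = nbrSum G f w := by
  rw [nbrSum_eq_sum_closedNbhd, nbrSum_eq_sum_closedNbhd, closedNbhd_deleteEdges_of_ne hu hv]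

lemma nbrSum_eq_add_nbrSum_deleteEdges_left (huv : G.Adj u v) :
    nbrSum G f u = f v + nbrSum (G.deleteEdges {s(u, v)}) f u := by
  have hv : v ∉ (G.deleteEdges {s(u, v)}).closedNbhd u := by
    simp [mem_closedNbhd, huv.ne']
  rw [nbrSum_eq_sum_closedNbhd, nbrSum_eq_sum_closedNbhd, closedNbhd_eq_insert_deleteEdges huv,
    sum_insert hv]

lemma nbrSum_eq_add_nbrSum_deleteEdges_right (huv : G.Adj u v) :
    nbrSum G f v = f u + nbrSum (G.deleteEdges {s(u, v)}) f v := by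
  rw [Sym2.eq_swap]
  exact nbrSum_eq_add_nbrSum_deleteEdges_left huv.symm

lemma nbrSum_mono (G : SimpleGraph V) (h : f ≤ g) (v : V) : nbrSum G f v ≤ nbrSum G g v :=
  sum_le_sum fun w _ => h w

end NbrSum

section Opinion

variable {V : Type*} {f : V → ℤ} {x : V}

lemma sum_update_one_of_eq_neg_one {s : Finset V} (hx : x ∈ s) (hfx : f x = -1) :
    ∑ w ∈ s, Function.update f x 1 w = ∑ w ∈ s, f w + 2 := by
  rw [sum_update_of_mem hx, ← add_sum_erase s f hx, hfx, sdiff_singleton_eq_erase]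
  ring

lemma IsOpinion.le_one (hf : IsOpinion f) (v : V) : f v ≤ 1 := by
  rcases hf v with h | h <;> omega

lemma IsOpinion.neg_one_le (hf : IsOpinion f) (v : V) : -1 ≤ f v := by
  rcases hf v with h | h <;> omega

lemma IsOpinion.update_one (hf : IsOpinion f) (x : V) : IsOpinion (Function.update f x 1) := by
  intro w
  by_cases hw : w = x
  · simp [hw]
  · simpa [hw] using hf w

lemma IsOpinion.le_update_one (hf : IsOpinion f) (x : V) : f ≤ Function.update f x 1 :=
  le_update_self_iff.2 (hf.le_one x)

end Opinion

section Gamma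

variable {V : Type*} [Fintype V] {G H : SimpleGraph V} {f g : V → ℤ}

lemma Majoritarian.mono (hm : Majoritarian G f)
    (h : ∀ w, 0 < nbrSum G f w → 0 < nbrSum H g w) : Majoritarian H g := by
  have hsub : yesVoters G f ⊆ yesVoters H g := by
    intro w hw
    simp only [yesVoters, mem_filter, mem_univ, true_and] at hw ⊢
    exact h w hw
  unfold Majoritarian at hm ⊢
  have := card_le_card hsub
  omega

lemma bddBelow_gamma_set (G : SimpleGraph V) :
    BddBelow {t : ℤ | ∃ f : V → ℤ, IsOpinion f ∧ Majoritarian G f ∧ t = ∑ v, f v} := by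
  refine ⟨-(Fintype.card V : ℤ), ?_⟩
  rintro t ⟨f, hf, -, rfl⟩
  simpa using sum_le_sum fun v (_ : v ∈ univ) => hf.neg_one_le v

lemma gamma_le_sum (hf : IsOpinion f) (hm : Majoritarian G f) : gamma G ≤ ∑ v, f v :=
  csInf_le (bddBelow_gamma_set G) ⟨f, hf, hm, rfl⟩

lemma majoritarian_one [Nonempty V] (G : SimpleGraph V) : Majoritarian G fun _ => 1 := by
  have hyes : yesVoters G (fun _ => 1) = univ := by
    refine filter_true_of_mem fun v _ => ?_
    rw [nbrSum_eq_sum_closedNbhd, sum_const, nsmul_one, Nat.cast_pos]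
    exact card_pos.2 ⟨v, self_mem_closedNbhd⟩
  unfold Majoritarian
  rw [hyes, card_univ]
  have := Fintype.card_pos (α := V)
  omega

lemma nonempty_gamma_set [Nonempty V] (G : SimpleGraph V) :
    {t : ℤ | ∃ f : V → ℤ, IsOpinion f ∧ Majoritarian G f ∧ t = ∑ v, f v}.Nonempty :=
  ⟨_, fun _ => 1, fun _ => Or.inl rfl, majoritarian_one G, rfl⟩

lemma exists_sum_eq_gamma [Nonempty V] (G : SimpleGraph V) :
    ∃ f : V → ℤ, IsOpinion f ∧ Majoritarian G f ∧ gamma G = ∑ v, f v :=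
  Int.csInf_mem (nonempty_gamma_set G) (bddBelow_gamma_set G)

end Gamma

section EdgeDeletion

variable {V : Type*} [Fintype V] {G : SimpleGraph V} {u v : V} {f g : V → ℤ}

lemma majoritarian_deleteEdges_of_endpoints (hm : Majoritarian G f) (hfg : f ≤ g)
    (hu : 0 < nbrSum G f u → 0 < nbrSum (G.deleteEdges {s(u, v)}) g u)
    (hv : 0 < nbrSum G f v → 0 < nbrSum (G.deleteEdges {s(u, v)}) g v) :
    Majoritarian (G.deleteEdges {s(u, v)}) g := by
  refine hm.mono fun w hw => ?_
  by_cases hwu : w = u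
  · subst hwu; exact hu hw
  by_cases hwv : w = v
  · subst hwv; exact hv hw
  rw [nbrSum_deleteEdges_of_ne hwu hwv]
  exact hw.trans_le (nbrSum_mono _ hfg w)

lemma majoritarian_of_deleteEdges_of_endpoints (hm : Majoritarian (G.deleteEdges {s(u, v)}) f)
    (hfg : f ≤ g)
    (hu : 0 < nbrSum (G.deleteEdges {s(u, v)}) f u → 0 < nbrSum G g u)
    (hv : 0 < nbrSum (G.deleteEdges {s(u, v)}) f v → 0 < nbrSum G g v) :
    Majoritarian G g := by
  refine hm.mono fun w hw => ?_
  by_cases hwu : w = u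
  · subst hwu; exact hu hw
  by_cases hwv : w = v
  · subst hwv; exact hv hw
  rw [nbrSum_deleteEdges_of_ne hwu hwv] at hw
  exact hw.trans_le (nbrSum_mono _ hfg w)

lemma exists_two_le_nbrSum (hf : IsOpinion f) (huv : G.Adj u v) :
    ∃ g, IsOpinion g ∧ f ≤ g ∧ ∑ w, g w ≤ ∑ w, f w + 2 ∧
      (0 < nbrSum G f u → 2 ≤ nbrSum G g u) := by
  by_cases hneg : ∃ x ∈ G.closedNbhd u, f x = -1
  · obtain ⟨x, hx, hfx⟩ := hneg
    refine ⟨Function.update f x 1, hf.update_one x, hf.le_update_one x,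
      (sum_update_one_of_eq_neg_one (mem_univ x) hfx).le, fun hpos => ?_⟩
    rw [nbrSum_eq_sum_closedNbhd, sum_update_one_of_eq_neg_one hx hfx,
      ← nbrSum_eq_sum_closedNbhd]
    omega
  · refine ⟨f, hf, le_rfl, by omega, fun _ => ?_⟩
    have hone : ∀ x ∈ G.closedNbhd u, f x = 1 := fun x hx =>
      (hf x).resolve_right fun h => hneg ⟨x, hx, h⟩
    rw [nbrSum_eq_sum_closedNbhd, sum_congr rfl hone, sum_const, nsmul_one]
    exact_mod_cast one_lt_card_closedNbhd huv

theorem gamma_deleteEdges_le [Nonempty V] (huv : G.Adj u v) :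
    gamma (G.deleteEdges {s(u, v)}) ≤ gamma G + 4 := by
  obtain ⟨f, hf, hm, hγ⟩ := exists_sum_eq_gamma G
  obtain ⟨g₁, hg₁, hfg₁, hsum₁, hu⟩ := exists_two_le_nbrSum hf huv
  obtain ⟨g, hg, hg₁g, hsum, hv⟩ := exists_two_le_nbrSum hg₁ huv.symm
  have hmaj : Majoritarian (G.deleteEdges {s(u, v)}) g := by
    refine majoritarian_deleteEdges_of_endpoints hm (hfg₁.trans hg₁g) (fun hpos => ?_)
      (fun hpos => ?_)
    · have := hu hpos
      linarith [nbrSum_eq_add_nbrSum_deleteEdges_left (f := g) huv, nbrSum_mono G hg₁g u,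
        hg.le_one v]
    · have := hv (hpos.trans_le (nbrSum_mono G hfg₁ v))
      linarith [nbrSum_eq_add_nbrSum_deleteEdges_right (f := g) huv, hg.le_one u]
  linarith [gamma_le_sum hg hmaj]

lemma gamma_le_sum_add_two_of_deleteEdges (huv : G.Adj u v) (hf : IsOpinion f)
    (hm : Majoritarian (G.deleteEdges {s(u, v)}) f) (hfu : f u = -1) :
    gamma G ≤ ∑ w, f w + 2 := by
  have hmaj : Majoritarian G (Function.update f u 1) := by
    refine majoritarian_of_deleteEdges_of_endpoints hm (hf.le_update_one u) (fun hpos => ?_)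
      (fun hpos => ?_)
    · rw [nbrSum_eq_add_nbrSum_deleteEdges_left huv, nbrSum_eq_sum_closedNbhd,
        sum_update_one_of_eq_neg_one self_mem_closedNbhd hfu, ← nbrSum_eq_sum_closedNbhd,
        Function.update_of_ne huv.ne']
      linarith [hf.neg_one_le v]
    · rw [nbrSum_eq_add_nbrSum_deleteEdges_right huv, Function.update_self]
      linarith [nbrSum_mono (G.deleteEdges {s(u, v)}) (hf.le_update_one u) v]
  calc gamma G ≤ ∑ w, Function.update f u 1 w := gamma_le_sum (hf.update_one u) hmaj
    _ = ∑ w, f w + 2 := sum_update_one_of_eq_neg_one (mem_univ u) hfu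

theorem gamma_le_gamma_deleteEdges_add_two [Nonempty V] (huv : G.Adj u v) :
    gamma G ≤ gamma (G.deleteEdges {s(u, v)}) + 2 := by
  obtain ⟨f, hf, hm, hγ⟩ := exists_sum_eq_gamma (G.deleteEdges {s(u, v)})
  rw [hγ]
  rcases hf u with hfu | hfu
  · rcases hf v with hfv | hfv
    · have hmaj : Majoritarian G f := majoritarian_of_deleteEdges_of_endpoints hm le_rfl
        (fun hpos => by rw [nbrSum_eq_add_nbrSum_deleteEdges_left huv, hfv]; omega)
        (fun hpos => by rw [nbrSum_eq_add_nbrSum_deleteEdges_right huv, hfu]; omega)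
      linarith [gamma_le_sum hf hmaj]
    · rw [Sym2.eq_swap] at hm
      exact gamma_le_sum_add_two_of_deleteEdges huv.symm hf hm hfv
  · exact gamma_le_sum_add_two_of_deleteEdges huv hf hm hfu

end EdgeDeletion

theorem gamma_bounds_of_le {V : Type*} [Fintype V] [Nonempty V] {G T : SimpleGraph V} (k : ℕ)
    (hle : T ≤ G) (hcard : #G.edgeFinset = #T.edgeFinset + k) :
    gamma T - 4 * k ≤ gamma G ∧ gamma G ≤ gamma T + 2 * k := by
  induction k generalizing G with
  | zero =>
    obtain rfl : T = G :=
      edgeFinset_inj.1 (eq_of_subset_of_card_le (edgeFinset_mono hle) (by omega))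
    simp
  | succ k ih =>
    obtain ⟨e, heG, heT⟩ := not_subset.1 fun h : G.edgeFinset ⊆ T.edgeFinset => by
      have := card_le_card h
      omega
    induction e using Sym2.ind with | h u v => ?_
    have huv : G.Adj u v := mem_edgeFinset.1 heG
    have hle' : T ≤ G.deleteEdges {s(u, v)} := fun a b hab =>
      (deleteEdges_adj ..).2 ⟨hle hab, fun h => heT (by
        rw [mem_edgeFinset, ← Set.mem_singleton_iff.1 h]; exact hab)⟩
    have hcard' : #(G.edgeFinset.erase s(u, v)) = #T.edgeFinset + k := by
      rw [card_erase_of_mem heG]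
      omega
    obtain ⟨h₁, h₂⟩ := ih hle' (by
      convert hcard' using 2
      ext
      simp [and_comm])
    push_cast
    constructor <;> linarith [gamma_deleteEdges_le huv, gamma_le_gamma_deleteEdges_add_two huv]

theorem stmt5_general {V : Type*} [Fintype V] [Nonempty V] (G T : SimpleGraph V) (k : ℕ)
    (hle : T ≤ G) (hT : T.IsTree)
    (hk : (k : ℤ) = G.edgeFinset.card - Fintype.card V + 1) :
    gamma T - 4 * k ≤ gamma G ∧ gamma G ≤ gamma T + 2 * k := by
  have hT_card : #T.edgeFinset + 1 = Fintype.card V := hT.card_edgeFinset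
  exact gamma_bounds_of_le k hle (by omega)

theorem stmt5 {V : Type*} [Fintype V] [Nonempty V] (G T : SimpleGraph V) (k : ℕ)
    (hG : G.Connected) (hle : T ≤ G) (hT : T.IsTree)
    (hk : (k : ℤ) = G.edgeFinset.card - Fintype.card V + 1) :
    gamma T - 4 * k ≤ gamma G ∧ gamma G ≤ gamma T + 2 * k :=
  stmt5_general G T k hle hT hk
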